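/- arXiv:1603.08332 — 2 statements merged into one kernel-verified Lean document; each statement's English description precedes it below -/
import Mathlib

section
/- For any positive integer p and nonnegative integers m, n, the product z_p^m ⋆̄ z_p^n equals the sum over i from 0 to min(m,n) of (-1)^i binom(m+n-2i, m-i) times the sum of all words containing z_p exactly (m+n-2i) times and z_{2p} exactly i times. -/
open MonoidAlgebra Finset

abbrev H : Type := MonoidAlgebra ℚ (FreeMonoid ℕ+)

noncomputable def word (w : List ℕ+) : H := MonoidAlgebra.single (FreeMonoid.ofList w) 1

noncomputable def z (k : ℕ+) : H := word [k]

noncomputable def st : List ℕ+ → List ℕ+ → H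
  | [], w => word w
  | k :: w1, [] => word (k :: w1)
  | k :: w1, l :: w2 =>
      z k * st w1 (l :: w2) + z l * st (k :: w1) w2 + z (k + l) * st w1 w2
termination_by a b => a.length + b.length
decreasing_by all_goals (simp; try omega)
noncomputable def stbar : List ℕ+ → List ℕ+ → H
  | [], w => word w
  | k :: w1, [] => word (k :: w1)
  | k :: w1, l :: w2 =>
      z k * stbar w1 (l :: w2) + z l * stbar (k :: w1) w2 - z (k + l) * stbar w1 w2
termination_by a b => a.length + b.length
decreasing_by all_goals (simp; try omega)

/-!
Write `x = z p` and `y = z (2 * p)`. On powers of `x` the recursion defining `stbar` becomes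
`T (m+1) (n+1) = x T m (n+1) + x T (m+1) n - y T m n` with `T m 0 = x ^ m` and `T 0 n = x ^ n`,
so it suffices that the right-hand side obeys the same recursion. Splitting a word on its first
letter gives `wordSum p (L+1) (i+1) = x wordSum p L (i+1) + y wordSum p L i`; the resulting
`x`-terms recombine by Pascal's rule for the binomial coefficients, and in the `y`-terms the shift
`i ↦ i + 1` flips the sign.
-/

theorem Finset.sum_powersetCard_succ_insert {α M : Type*} [DecidableEq α] [AddCommMonoid M]
    {x : α} {s : Finset α} (hx : x ∉ s) (n : ℕ) (f : Finset α → M) :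
    ∑ t ∈ powersetCard (n + 1) (insert x s), f t =
      ∑ t ∈ powersetCard (n + 1) s, f t + ∑ t ∈ powersetCard n s, f (insert x t) := by
  have hinj : Set.InjOn (insert x) (powersetCard n s : Set (Finset α)) := by
    intro t ht u hu htu
    have hxt : x ∉ t := fun h => hx ((mem_powersetCard.1 ht).1 h)
    have hxu : x ∉ u := fun h => hx ((mem_powersetCard.1 hu).1 h)
    rw [← erase_insert hxt, ← erase_insert hxu, htu]
  have hdisj : Disjoint (powersetCard (n + 1) s) ((powersetCard n s).image (insert x)) := by
    refine disjoint_left.2 fun t ht ht' => ?_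
    obtain ⟨u, -, rfl⟩ := mem_image.1 ht'
    exact hx ((mem_powersetCard.1 ht).1 (mem_insert_self x u))
  rw [powersetCard_succ_insert hx, sum_union hdisj, sum_image hinj]

theorem Fin.sum_powersetCard_univ_succ {M : Type*} [AddCommMonoid M] (L i : ℕ)
    (f : Finset (Fin (L + 1)) → M) :
    ∑ S ∈ powersetCard (i + 1) (univ : Finset (Fin (L + 1))), f S =
      ∑ T ∈ powersetCard (i + 1) (univ : Finset (Fin L)), f (T.map (Fin.succEmb L)) +
        ∑ T ∈ powersetCard i (univ : Finset (Fin L)), f (insert 0 (T.map (Fin.succEmb L))) := by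
  rw [Fin.univ_succ, cons_eq_insert, sum_powersetCard_succ_insert (by simp),
    powersetCard_map, powersetCard_map, sum_map, sum_map]
  rfl

lemma word_cons (k : ℕ+) (w : List ℕ+) : word (k :: w) = z k * word w := by
  rw [z, word, word, word, single_mul_single, one_mul]
  rfl

noncomputable def wordSum (p : ℕ+) (L i : ℕ) : H :=
  ∑ S ∈ powersetCard i (univ : Finset (Fin L)),
    word (List.ofFn fun j => if j ∈ S then 2 * p else p)

lemma wordSum_of_lt (p : ℕ+) {L i : ℕ} (h : L < i) : wordSum p L i = 0 := by
  rw [wordSum, powersetCard_eq_empty.2 (by simpa using h), sum_empty]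

lemma wordSum_zero (p : ℕ+) (L : ℕ) : wordSum p L 0 = word (List.replicate L p) := by
  simp [wordSum]

lemma wordSum_succ_succ (p : ℕ+) (L i : ℕ) :
    wordSum p (L + 1) (i + 1) = z p * wordSum p L (i + 1) + z (2 * p) * wordSum p L i := by
  rw [wordSum, Fin.sum_powersetCard_univ_succ, wordSum, wordSum, mul_sum, mul_sum]
  congr 1 <;> refine sum_congr rfl fun T _ => ?_ <;>
    simp [List.ofFn_succ, word_cons, Fin.succ_ne_zero]

-- Cut off at `min m n` (truncated subtraction would give nonzero junk beyond it), so that sums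
-- against it may run over any longer range.
def stbarCoeff (m n i : ℕ) : ℚ :=
  if i ≤ min m n then (-1) ^ i * ((m + n - 2 * i).choose (m - i) : ℚ) else 0

lemma stbarCoeff_succ_succ_succ (m n i : ℕ) :
    stbarCoeff (m + 1) (n + 1) (i + 1) = -stbarCoeff m n i := by
  have hsum : m + 1 + (n + 1) - 2 * (i + 1) = m + n - 2 * i := by omega
  simp only [stbarCoeff, hsum, Nat.add_sub_add_right, pow_succ, Nat.add_min_add_right,
    Nat.add_le_add_iff_right]
  split_ifs <;> ring

lemma stbarCoeff_pascal {m n i : ℕ} (h : i ≤ m ∨ i ≤ n) :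
    stbarCoeff (m + 1) (n + 1) i = stbarCoeff m (n + 1) i + stbarCoeff (m + 1) n i := by
  unfold stbarCoeff
  split_ifs <;> try omega
  · have e₁ : m + 1 + (n + 1) - 2 * i = m + n + 1 - 2 * i + 1 := by omega
    have e₂ : m + 1 - i = m - i + 1 := by omega
    rw [e₁, e₂, Nat.choose_succ_succ, show m + (n + 1) - 2 * i = m + n + 1 - 2 * i by omega,
      show m + 1 + n - 2 * i = m + n + 1 - 2 * i by omega]
    push_cast
    ring
  · obtain rfl : i = n + 1 := by omega
    rw [show m + 1 + (n + 1) - 2 * (n + 1) = m + 1 - (n + 1) by omega,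
      show m + (n + 1) - 2 * (n + 1) = m - (n + 1) by omega, Nat.choose_self, Nat.choose_self]
    ring
  · obtain rfl : i = m + 1 := by omega
    simp
  · simp

noncomputable def stbarFormula (p : ℕ+) (m n : ℕ) : H :=
  ∑ i ∈ range (min m n + 1), stbarCoeff m n i • wordSum p (m + n - i) i

lemma stbarFormula_eq_sum_range (p : ℕ+) {m n N : ℕ} (h : min m n < N) :
    stbarFormula p m n = ∑ i ∈ range N, stbarCoeff m n i • wordSum p (m + n - i) i := by
  refine sum_subset (range_subset_range.2 h) fun i _ hi => ?_
  rw [stbarCoeff, if_neg (by simpa [Nat.lt_succ_iff] using hi), zero_smul]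

lemma sum_smul_wordSum_succ (p : ℕ+) (a : ℕ → ℚ) {L K : ℕ} (hK : K ≤ L) :
    ∑ i ∈ range (K + 1), a i • wordSum p (L + 1 - i) i =
      z p * ∑ i ∈ range (K + 1), a i • wordSum p (L - i) i +
        z (2 * p) * ∑ i ∈ range K, a (i + 1) • wordSum p (L - (i + 1)) i := by
  have hshift : ∀ i ∈ range K, a (i + 1) • wordSum p (L + 1 - (i + 1)) (i + 1) =
      z p * (a (i + 1) • wordSum p (L - (i + 1)) (i + 1)) +
        z (2 * p) * (a (i + 1) • wordSum p (L - (i + 1)) i) := by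
    intro i hi
    rw [show L + 1 - (i + 1) = L - (i + 1) + 1 by simp at hi; omega, wordSum_succ_succ,
      smul_add, mul_smul_comm, mul_smul_comm]
  rw [sum_range_succ', sum_congr rfl hshift, sum_add_distrib, sum_range_succ' _ K, mul_add,
    mul_sum, mul_sum, Nat.sub_zero, Nat.sub_zero, wordSum_zero, wordSum_zero,
    List.replicate_succ, word_cons, mul_smul_comm]
  abel

lemma stbarFormula_succ_succ (p : ℕ+) (m n : ℕ) :
    stbarFormula p (m + 1) (n + 1) =
      z p * stbarFormula p m (n + 1) + z p * stbarFormula p (m + 1) n -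
        z (2 * p) * stbarFormula p m n := by
  have hx : ∑ i ∈ range (min m n + 2),
      stbarCoeff (m + 1) (n + 1) i • wordSum p (m + n + 1 - i) i =
      stbarFormula p m (n + 1) + stbarFormula p (m + 1) n := by
    rw [stbarFormula_eq_sum_range p (N := min m n + 2) (by omega),
      stbarFormula_eq_sum_range p (N := min m n + 2) (by omega), ← sum_add_distrib]
    refine sum_congr rfl fun i hi => ?_
    rw [show m + (n + 1) = m + n + 1 by omega, show m + 1 + n = m + n + 1 by omega, ← add_smul]
    by_cases h : i ≤ m ∨ i ≤ n
    · rw [stbarCoeff_pascal h]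
    -- the corner `i = m + 1 = n + 1`, where Pascal's rule fails but no word survives
    · rw [wordSum_of_lt p (by omega), smul_zero, smul_zero]
  have hy : ∑ i ∈ range (min m n + 1),
      stbarCoeff (m + 1) (n + 1) (i + 1) • wordSum p (m + n + 1 - (i + 1)) i =
        -stbarFormula p m n := by
    simp only [stbarFormula, stbarCoeff_succ_succ_succ, Nat.add_sub_add_right, neg_smul,
      sum_neg_distrib]
  rw [stbarFormula, Nat.add_min_add_right, show m + 1 + (n + 1) = m + n + 1 + 1 by omega,
    sum_smul_wordSum_succ p _ (by omega), hx, hy]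
  noncomm_ring

lemma stbarFormula_zero_left (p : ℕ+) (n : ℕ) :
    stbarFormula p 0 n = word (List.replicate n p) := by
  simp [stbarFormula, stbarCoeff, wordSum_zero]

lemma stbarFormula_zero_right (p : ℕ+) (m : ℕ) :
    stbarFormula p m 0 = word (List.replicate m p) := by
  simp [stbarFormula, stbarCoeff, wordSum_zero]

lemma stbar_nil_right (w : List ℕ+) : stbar w [] = word w := by
  cases w <;> rw [stbar]

lemma stbar_replicate_succ_succ (p : ℕ+) (m n : ℕ) :
    stbar (List.replicate (m + 1) p) (List.replicate (n + 1) p) =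
      z p * stbar (List.replicate m p) (List.replicate (n + 1) p) +
        z p * stbar (List.replicate (m + 1) p) (List.replicate n p) -
          z (2 * p) * stbar (List.replicate m p) (List.replicate n p) := by
  rw [List.replicate_succ, List.replicate_succ, stbar, ← List.replicate_succ,
    ← List.replicate_succ, show p + p = 2 * p from PNat.eq (two_mul (p : ℕ)).symm]

lemma stbar_replicate_eq_stbarFormula (p : ℕ+) (m n : ℕ) :
    stbar (List.replicate m p) (List.replicate n p) = stbarFormula p m n := by
  induction m generalizing n with
  | zero => rw [List.replicate_zero, stbar, stbarFormula_zero_left]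
  | succ m ihm =>
    induction n with
    | zero => rw [List.replicate_zero, stbar_nil_right, stbarFormula_zero_right]
    | succ n ihn => rw [stbar_replicate_succ_succ, ihm, ihn, ihm, stbarFormula_succ_succ]

theorem stbar_pow_pow (p : ℕ+) (m n : ℕ) :
    stbar (List.replicate m p) (List.replicate n p) =
      ∑ i ∈ Finset.range (min m n + 1),
        ((-1 : ℚ) ^ i * (Nat.choose (m + n - 2 * i) (m - i) : ℚ)) •
          ∑ S ∈ Finset.powersetCard i (Finset.univ : Finset (Fin (m + n - 2 * i + i))),
            word (List.ofFn fun j => if j ∈ S then 2 * p else p) := by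
  rw [stbar_replicate_eq_stbarFormula]
  refine sum_congr rfl fun i hi => ?_
  rw [stbarCoeff, if_pos (Nat.lt_succ_iff.1 (mem_range.1 hi)),
    show m + n - i = m + n - 2 * i + i by simp at hi; omega]
  rfl
end

section
/- For positive integers l, p and nonnegative integers m, n_1, n_2: z_p^m * z_p^{n_1} z_l z_p^{n_2} = Σ_{i=0}^{m} [ (z_p^i * z_p^{n_1}) z_l + (z_p^{i-1} * z_p^{n_1}) z_{p+l} ] (z_p^{m-i} * z_p^{n_2}), with the convention z_p^{-1} = 0. -/
open MonoidAlgebra Finset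

/-!
Double induction on `m` and `n₁`. Peeling the leading `z_p` off both arguments of the stuffle
product gives a three-term recursion for the left-hand side, and each summand of the right-hand
side obeys the same recursion. The only boundary effect is at `n₁ = 0`, where the leading `z_p`
merges with `z_l` into the extra term `z_{p+l} (z_p^m * z_p^{n₂})`: it is exactly the `i = 1`
contribution of the `z_{p+l}` column.
-/

lemma word_append (u v : List ℕ+) : word (u ++ v) = word u * word v := by
  simp [word, MonoidAlgebra.single_mul_single]

lemma word_nil : word [] = 1 := rfl

lemma st_nil_left (w : List ℕ+) : st [] w = word w := by
  rw [st]

lemma st_nil_right (w : List ℕ+) : st w [] = word w := by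
  cases w <;> rw [st]

lemma st_cons_cons (k l : ℕ+) (u v : List ℕ+) :
    st (k :: u) (l :: v) = z k * st u (l :: v) + z l * st (k :: u) v + z (k + l) * st u v := by
  rw [st]

section Replicate

variable (p l : ℕ+)

lemma st_nil_replicate_succ (j : ℕ) :
    st [] (List.replicate (j + 1) p) = z p * st [] (List.replicate j p) := by
  rw [st_nil_left, st_nil_left, List.replicate_succ, word_cons]

lemma st_replicate_succ_nil (i : ℕ) :
    st (List.replicate (i + 1) p) [] = z p * st (List.replicate i p) [] := by
  rw [st_nil_right, st_nil_right, List.replicate_succ, word_cons]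

lemma st_replicate_succ_succ (i j : ℕ) :
    st (List.replicate (i + 1) p) (List.replicate (j + 1) p) =
      z p * st (List.replicate i p) (List.replicate (j + 1) p)
        + z p * st (List.replicate (i + 1) p) (List.replicate j p)
        + z (p + p) * st (List.replicate i p) (List.replicate j p) := by
  simp only [List.replicate_succ]
  exact st_cons_cons ..

noncomputable def insertSummand (n₁ n₂ m i : ℕ) : H :=
  (st (List.replicate i p) (List.replicate n₁ p) * z l
    + if 1 ≤ i then st (List.replicate (i - 1) p) (List.replicate n₁ p) * z (p + l) else 0)
  * st (List.replicate (m - i) p) (List.replicate n₂ p)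

lemma insertSummand_zero (n₁ n₂ m : ℕ) :
    insertSummand p l n₁ n₂ m 0 =
      st [] (List.replicate n₁ p) * z l * st (List.replicate m p) (List.replicate n₂ p) := by
  simp [insertSummand]

lemma insertSummand_succ_zero (n₁ n₂ m : ℕ) :
    insertSummand p l (n₁ + 1) n₂ m 0 = z p * insertSummand p l n₁ n₂ m 0 := by
  simp only [insertSummand_zero, st_nil_replicate_succ, mul_assoc]

lemma insertSummand_zero_succ_succ (n₂ m j : ℕ) :
    insertSummand p l 0 n₂ (m + 1) (j + 1) =
      z p * insertSummand p l 0 n₂ m j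
        + if j = 0 then z (p + l) * st (List.replicate m p) (List.replicate n₂ p) else 0 := by
  rcases j with _ | j
  · simp only [insertSummand, zero_add, List.replicate_one, List.replicate_zero, st_nil_right,
      word_cons, word_nil, mul_one, le_refl, ↓reduceIte, tsub_self, one_mul,
      add_tsub_cancel_right, nonpos_iff_eq_zero, one_ne_zero, add_zero, tsub_zero]
    noncomm_ring
  · simp only [insertSummand, List.replicate_zero, st_replicate_succ_nil, le_add_iff_nonneg_left,
      zero_le, ↓reduceIte, add_tsub_cancel_right, Nat.reduceSubDiff, Nat.add_eq_zero_iff,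
      one_ne_zero, and_false, add_zero]
    noncomm_ring

lemma insertSummand_succ_succ_succ (n₁ n₂ m j : ℕ) :
    insertSummand p l (n₁ + 1) n₂ (m + 1) (j + 1) =
      z p * insertSummand p l (n₁ + 1) n₂ m j
        + z p * insertSummand p l n₁ n₂ (m + 1) (j + 1)
        + z (p + p) * insertSummand p l n₁ n₂ m j := by
  rcases j with _ | j
  · rw [insertSummand, insertSummand, insertSummand, insertSummand, st_replicate_succ_succ]
    simp only [List.replicate_zero, st_nil_replicate_succ, zero_add, List.replicate_one, le_refl,
      ↓reduceIte, tsub_self, add_tsub_cancel_right, nonpos_iff_eq_zero, one_ne_zero, add_zero,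
      tsub_zero]
    noncomm_ring
  · simp only [insertSummand, st_replicate_succ_succ, le_add_iff_nonneg_left, zero_le,
      ↓reduceIte, add_tsub_cancel_right, Nat.reduceSubDiff]
    noncomm_ring

theorem st_replicate_replicate_insert (m n₁ n₂ : ℕ) :
    st (List.replicate m p) (List.replicate n₁ p ++ l :: List.replicate n₂ p) =
      ∑ i ∈ range (m + 1), insertSummand p l n₁ n₂ m i := by
  induction m generalizing n₁ with
  | zero =>
    rw [sum_range_one, insertSummand_zero, List.replicate_zero, st_nil_left, st_nil_left,
      st_nil_left, word_append, word_cons, mul_assoc]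
  | succ m ihm =>
    induction n₁ with
    | zero =>
      calc st (List.replicate (m + 1) p) (l :: List.replicate n₂ p)
          = z p * st (List.replicate m p) (l :: List.replicate n₂ p)
            + z l * st (List.replicate (m + 1) p) (List.replicate n₂ p)
            + z (p + l) * st (List.replicate m p) (List.replicate n₂ p) := st_cons_cons ..
        _ = insertSummand p l 0 n₂ (m + 1) 0
            + (z p * ∑ i ∈ range (m + 1), insertSummand p l 0 n₂ m i
              + z (p + l) * st (List.replicate m p) (List.replicate n₂ p)) := by
          rw [← List.nil_append (l :: _), ← List.replicate_zero, ihm, insertSummand_zero]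
          simp only [List.replicate_zero, st_nil_left, word_nil, one_mul]
          abel
        _ = _ := by
          simp only [sum_range_succ' _ (m + 1), insertSummand_zero_succ_succ, sum_add_distrib,
            sum_ite_eq', mem_range, Nat.zero_lt_succ, if_true, mul_sum]
          abel
    | succ n₁ ihn =>
      calc st (List.replicate (m + 1) p) (List.replicate (n₁ + 1) p ++ l :: List.replicate n₂ p)
          = z p * st (List.replicate m p) (List.replicate (n₁ + 1) p ++ l :: List.replicate n₂ p)
            + z p * st (List.replicate (m + 1) p) (List.replicate n₁ p ++ l :: List.replicate n₂ p)
            + z (p + p) * st (List.replicate m p) (List.replicate n₁ p ++ l :: List.replicate n₂ p) :=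
          st_cons_cons ..
        _ = _ := by
          rw [ihm, ihn, ihm, sum_range_succ' _ (m + 1), sum_range_succ' _ (m + 1)]
          simp only [insertSummand_succ_succ_succ, insertSummand_succ_zero, sum_add_distrib,
            mul_sum, mul_add]
          abel

end Replicate

theorem st_zero_two (l p : ℕ+) (m n1 n2 : ℕ) :
    st (List.replicate m p) (List.replicate n1 p ++ l :: List.replicate n2 p) =
      ∑ i ∈ Finset.range (m + 1),
        (st (List.replicate i p) (List.replicate n1 p) * z l
          + if 1 ≤ i then st (List.replicate (i - 1) p) (List.replicate n1 p) * z (p + l)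
            else 0)
        * st (List.replicate (m - i) p) (List.replicate n2 p) :=
  st_replicate_replicate_insert p l m n1 n2
end
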